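/- arXiv:2209.03916 — 2 statements merged into one kernel-verified Lean document; each statement's English description precedes it below -/
import Mathlib

section
/- The optimal constant in the Agmon–Hörmander inequality on the circle, C_R = sup_{k≥0} Λ_R^k, satisfies: C_R = Λ_R^0 if J₀(R)J₁(R) ≥ 0, and C_R = Λ_R^1 if J₀(R)J₁(R) ≤ 0, where Λ_R^k = (R/2)J_k(R)² − (R/2)J_{k−1}(R)J_{k+1}(R). -/
/-!
Differentiating `sin (n θ - x sin θ)` and integrating over `[0, π]` gives the three-term recurrence
`x (J_{n-1}(x) + J_{n+1}(x)) = 2n J_n(x)`. Eliminating `J_{k-1}` and `J_{k+3}` with it yields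
`R (Λ_R^k - Λ_R^{k+2}) = 2(k+1) J_{k+1}(R)²`, so for `R > 0` the even-indexed and the odd-indexed
`Λ_R^k` both decrease and `sup_k Λ_R^k = max (Λ_R^0, Λ_R^1)`. The same recurrence gives
`Λ_R^0 - Λ_R^1 = J₀(R) J₁(R)`, whose sign decides which of the two is the maximum.
-/

open Real intervalIntegral

/-- Bessel function of the first kind of integer order, via Bessel's integral representation
(`J_{−1} = −J₁` with this convention). -/
noncomputable def besselJ (n : ℤ) (x : ℝ) : ℝ :=
  (1 / π) * ∫ θ in (0:ℝ)..π, Real.cos (n * θ - x * Real.sin θ)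

/-- `Λ_R^k = (R/2)J_k(R)² − (R/2)J_{k−1}(R)J_{k+1}(R)`. -/
noncomputable def LamR (R : ℝ) (k : ℕ) : ℝ :=
  R / 2 * besselJ k R ^ 2 - R / 2 * besselJ ((k : ℤ) - 1) R * besselJ ((k : ℤ) + 1) R

theorem ciSup_eq_max_of_add_two_le {α : Type*} [ConditionallyCompleteLinearOrder α] {a : ℕ → α}
    (h : ∀ k, a (k + 2) ≤ a k) : ⨆ k, a k = max (a 0) (a 1) := by
  have le_parity : ∀ k, a k ≤ a (k % 2) := by
    intro k
    induction k using Nat.twoStepInduction with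
    | zero => rfl
    | one => rfl
    | more n ih _ => simpa [Nat.add_mod_right] using (h n).trans ih
  have le_max : ∀ k, a k ≤ max (a 0) (a 1) := fun k =>
    (le_parity k).trans <| by rcases Nat.mod_two_eq_zero_or_one k with hk | hk <;> simp [hk]
  refine le_antisymm (ciSup_le le_max) (max_le ?_ ?_) <;>
    exact le_ciSup ⟨_, Set.forall_mem_range.2 le_max⟩ _

theorem integral_mul_cos_besselPhase_eq_zero (n : ℤ) (x : ℝ) :
    ∫ θ in (0:ℝ)..π, ((n : ℝ) - x * cos θ) * cos (n * θ - x * sin θ) = 0 := by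
  have hderiv : ∀ θ : ℝ, HasDerivAt (fun θ => sin (n * θ - x * sin θ))
      (((n : ℝ) - x * cos θ) * cos (n * θ - x * sin θ)) θ := fun θ => by
    have hphase : HasDerivAt (fun θ => n * θ - x * sin θ) ((n : ℝ) - x * cos θ) θ :=
      (((hasDerivAt_id' θ).const_mul (n : ℝ)).sub
        ((hasDerivAt_sin θ).const_mul x)).congr_deriv (by ring)
    exact ((hasDerivAt_sin _).comp θ hphase).congr_deriv (by ring)
  rw [integral_eq_sub_of_hasDerivAt (fun θ _ => hderiv θ)
    (Continuous.intervalIntegrable (by fun_prop) _ _)]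
  simp [sin_int_mul_pi]

theorem besselJ_sub_one_add_besselJ_add_one (n : ℤ) (x : ℝ) :
    x * (besselJ (n - 1) x + besselJ (n + 1) x) = 2 * n * besselJ n x := by
  have hzero := integral_mul_cos_besselPhase_eq_zero n x
  -- product-to-sum: `2 cos θ cos φ = cos (φ - θ) + cos (φ + θ)`
  have hsplit : ∀ θ : ℝ, ((n : ℝ) - x * cos θ) * cos (n * θ - x * sin θ) =
      n * cos (n * θ - x * sin θ) - x / 2 * (cos (((n - 1 : ℤ) : ℝ) * θ - x * sin θ) +
        cos (((n + 1 : ℤ) : ℝ) * θ - x * sin θ)) := fun θ => by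
    have e₁ : ((n - 1 : ℤ) : ℝ) * θ - x * sin θ = (n * θ - x * sin θ) - θ := by push_cast; ring
    have e₂ : ((n + 1 : ℤ) : ℝ) * θ - x * sin θ = (n * θ - x * sin θ) + θ := by push_cast; ring
    rw [e₁, e₂, cos_sub _ θ, cos_add _ θ]
    ring
  simp_rw [hsplit] at hzero
  rw [integral_sub (Continuous.intervalIntegrable (by fun_prop) _ _)
      (Continuous.intervalIntegrable (by fun_prop) _ _), integral_const_mul, integral_const_mul,
    integral_add (Continuous.intervalIntegrable (by fun_prop) _ _)
      (Continuous.intervalIntegrable (by fun_prop) _ _)] at hzero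
  unfold besselJ
  field_simp
  linear_combination (-2) * hzero

theorem mul_LamR_sub_LamR_add_two (R : ℝ) (k : ℕ) :
    R * (LamR R k - LamR R (k + 2)) = 2 * (k + 1) * besselJ (k + 1) R ^ 2 := by
  have rec₀ := besselJ_sub_one_add_besselJ_add_one k R
  have rec₁ := besselJ_sub_one_add_besselJ_add_one (k + 1) R
  have rec₂ := besselJ_sub_one_add_besselJ_add_one (k + 2) R
  simp only [LamR, Nat.cast_add, Nat.cast_ofNat, Int.cast_add, Int.cast_natCast, Int.cast_one,
    Int.cast_ofNat] at *
  rw [add_sub_cancel_right, add_assoc, one_add_one_eq_two] at rec₁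
  rw [show (k : ℤ) + 2 - 1 = k + 1 by ring, show (k : ℤ) + 2 + 1 = k + 3 by ring] at rec₂ ⊢
  linear_combination (-R * besselJ (k + 1) R / 2) * rec₀ + (R * besselJ (k + 1) R / 2) * rec₂ +
    (R * (besselJ k R - besselJ (k + 2) R) / 2 + besselJ (k + 1) R) * rec₁

theorem LamR_add_two_le {R : ℝ} (hR : 0 < R) (k : ℕ) : LamR R (k + 2) ≤ LamR R k := by
  have h : 0 ≤ R * (LamR R k - LamR R (k + 2)) := by
    rw [mul_LamR_sub_LamR_add_two]
    positivity
  linarith [nonneg_of_mul_nonneg_right h hR]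

theorem LamR_zero_sub_LamR_one (R : ℝ) :
    LamR R 0 - LamR R 1 = besselJ 0 R * besselJ 1 R := by
  have rec₀ := besselJ_sub_one_add_besselJ_add_one 0 R
  have rec₁ := besselJ_sub_one_add_besselJ_add_one 1 R
  norm_num [LamR]
  norm_num [-mul_eq_zero] at rec₀ rec₁
  linear_combination (-besselJ 1 R / 2) * rec₀ + (besselJ 0 R / 2) * rec₁

/-- The optimal Agmon–Hörmander constant on the circle, `C_R = sup_{k≥0} Λ_R^k`, equals
`Λ_R^0` when `J₀(R)J₁(R) ≥ 0`, and `Λ_R^1` when `J₀(R)J₁(R) ≤ 0`. -/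
theorem agmon_hormander_optimal_constant (R : ℝ) (hR : 0 < R) :
    (0 ≤ besselJ 0 R * besselJ 1 R → (⨆ k : ℕ, LamR R k) = LamR R 0) ∧
    (besselJ 0 R * besselJ 1 R ≤ 0 → (⨆ k : ℕ, LamR R k) = LamR R 1) := by
  rw [ciSup_eq_max_of_add_two_le (LamR_add_two_le hR)]
  have hdiff := LamR_zero_sub_LamR_one R
  exact ⟨fun h => max_eq_left (by linarith), fun h => max_eq_right (by linarith)⟩
end

section
/- For d odd, let p = 2(d+1)/(d−1), let n > 0 be an integer, and let Y_n be a spherical harmonic of degree n on S^d. Then ∫_{𝔻^{1+d}} |cos((d−1)T/2)|^{p−2} cos((d−1)T/2) cos(T(n+(d−1)/2)) Y_n(X) dT dS(X) = 0, where 𝔻^{1+d} = {(T, X) ∈ [−π,π] × S^d : R(X) < π − |T|} and R(X) is the polar angle of X. -/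
/-!
The integrand is `F(T) Y(X)` restricted to the diamond, where `F(T) = |cos mT|^α cos mT cos(T(n+m))`
with `m = (d-1)/2 ∈ ℕ`. Writing `G t` for the integral of `Y` over the open cap `{R < t}` and
`H t` for the closed cap `{R ≤ t}`, the antipodal map `X ↦ -X` sends `R` to `π - R` and `Y` to
`(-1)ⁿ Y`, so the mean-zero condition gives `G t = -(-1)ⁿ H (π - t)`. Since `m` is an integer,
`F (π - T) = (-1)ⁿ F T`. Hence `Φ T = F T · G (π - T)` satisfies `Φ (π - T) = -Φ T` wherever
`G T = H T`, which fails only for the countably many `t` where `{R = t}` has positive measure.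
So `∫₀^π Φ = 0`, and the diamond integral, being `∫_{[-π,π]} Φ |T| dT`, vanishes.
-/

open MeasureTheory Real

/-- The surface measure on `S^d ⊂ ℝ^{d+1}`. -/
noncomputable def sphereMeasure (d : ℕ) : Measure (EuclideanSpace ℝ (Fin (d + 1))) :=
  (μH[d]).restrict (Metric.sphere (0 : EuclideanSpace ℝ (Fin (d + 1))) 1)

open Set Metric Module

open scoped RealInnerProductSpace

section SphereMeasure

variable {E : Type*} [NormedAddCommGroup E] [InnerProductSpace ℝ E]

theorem sphere_inter_inner_nonpos_subset_stereoInvFunAux_image {v : E} (hv : ‖v‖ = 1) :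
    {x ∈ sphere (0 : E) 1 | ⟪v, x⟫ ≤ 0} ⊆
      (stereoInvFunAux v ∘ (↑)) '' closedBall (0 : (ℝ ∙ v)ᗮ) 2 := by
  rintro x ⟨hx, hvx⟩
  have hxv : x ≠ v := by
    rintro rfl
    norm_num [hv] at hvx
  refine ⟨stereoToFun v x, ?_, ?_⟩
  · have hproj := ((ℝ ∙ v)ᗮ).norm_orthogonalProjectionOnto_apply_le x
    rw [show ‖x‖ = 1 by simpa using hx] at hproj
    rw [mem_closedBall_zero_iff, stereoToFun_apply, norm_smul, innerSL_apply_apply,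
      Real.norm_eq_abs, abs_div, abs_two, abs_of_pos (by linarith)]
    calc 2 / (1 - ⟪v, x⟫) * ‖(ℝ ∙ v)ᗮ.orthogonalProjectionOnto x‖ ≤ 2 / 1 * 1 := by
          gcongr
          linarith
      _ = 2 := by norm_num
  · simpa [stereoInvFun_apply] using congrArg Subtype.val (stereo_left_inv hv (x := ⟨x, hx⟩) hxv)

theorem hausdorffMeasure_image_lt_top_of_contDiff {F : Type*} [NormedAddCommGroup F]
    [NormedSpace ℝ F] [FiniteDimensional ℝ F] [MeasurableSpace E] [BorelSpace E]
    {f : F → E} (hf : ContDiff ℝ 1 f) {K : Set F} (hK : IsCompact K) (hKc : Convex ℝ K) :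
    μH[finrank ℝ F] (f '' K) < ⊤ := by
  borelize F
  obtain ⟨C, hC⟩ := hf.contDiffOn.exists_lipschitzOnWith one_ne_zero hKc hK
  calc μH[finrank ℝ F] (f '' K) ≤ C ^ (finrank ℝ F : ℝ) * μH[finrank ℝ F] K :=
        hC.hausdorffMeasure_image_le (Nat.cast_nonneg _)
    _ < ⊤ := ENNReal.mul_lt_top (by simp) hK.measure_lt_top

theorem hausdorffMeasure_sphere_lt_top [MeasurableSpace E] [BorelSpace E] {d : ℕ}
    (hd : finrank ℝ E = d + 1) : μH[d] (sphere (0 : E) 1) < ⊤ := by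
  have : Fact (finrank ℝ E = d + 1) := ⟨hd⟩
  have : FiniteDimensional ℝ E := .of_fact_finrank_eq_succ d
  have : Nontrivial E := Module.nontrivial_of_finrank_eq_succ hd
  obtain ⟨v, hv⟩ := exists_norm_eq E zero_le_one
  have hemisphere_lt_top : ∀ u : E, ‖u‖ = 1 → μH[d] {x ∈ sphere (0 : E) 1 | ⟪u, x⟫ ≤ 0} < ⊤ := by
    intro u hu
    refine (measure_mono (sphere_inter_inner_nonpos_subset_stereoInvFunAux_image hu)).trans_lt ?_
    rw [← Submodule.finrank_orthogonal_span_singleton (𝕜 := ℝ) (n := d)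
      (ne_zero_of_norm_ne_zero (hu.symm ▸ one_ne_zero))]
    exact hausdorffMeasure_image_lt_top_of_contDiff
      (contDiff_stereoInvFunAux.comp (ℝ ∙ u)ᗮ.subtypeL.contDiff)
      (isCompact_closedBall _ _) (convex_closedBall _ _)
  have hcover : sphere (0 : E) 1 ⊆
      {x ∈ sphere (0 : E) 1 | ⟪v, x⟫ ≤ 0} ∪ {x ∈ sphere (0 : E) 1 | ⟪-v, x⟫ ≤ 0} := by
    intro x hx
    rcases le_total ⟪v, x⟫ 0 with h | h
    · exact Or.inl ⟨hx, h⟩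
    · exact Or.inr ⟨hx, by rw [inner_neg_left]; linarith⟩
  exact (measure_mono hcover).trans_lt ((measure_union_le _ _).trans_lt
    (ENNReal.add_lt_top.2 ⟨hemisphere_lt_top v hv, hemisphere_lt_top (-v) (by rw [norm_neg, hv])⟩))

end SphereMeasure

instance (d : ℕ) : IsFiniteMeasure (sphereMeasure d) :=
  ⟨by simpa [sphereMeasure] using
    hausdorffMeasure_sphere_lt_top (finrank_euclideanSpace_fin (n := d + 1))⟩

instance (d : ℕ) : (sphereMeasure d).IsNegInvariant := by
  have hneg := (IsometryEquiv.measurePreserving_hausdorffMeasure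
    (IsometryEquiv.neg (EuclideanSpace ℝ (Fin (d + 1)))) (d : ℝ)).restrict_preimage
    (s := sphere 0 1) isClosed_sphere.measurableSet
  simp only [IsometryEquiv.preimage_sphere, IsometryEquiv.neg_symm, IsometryEquiv.neg_apply,
    neg_zero] at hneg
  exact ⟨hneg.map_eq⟩

theorem Continuous.integrable_sphereMeasure {d : ℕ} {Y : EuclideanSpace ℝ (Fin (d + 1)) → ℝ}
    (hY : Continuous Y) : Integrable Y (sphereMeasure d) :=
  hY.continuousOn.integrableOn_of_subset_isCompact (isCompact_sphere 0 1)
    isClosed_sphere.measurableSet subset_rfl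
    (by simpa [sphereMeasure] using (measure_lt_top (sphereMeasure d) univ).ne)

section CapIntegrals

variable {α : Type*} [MeasurableSpace α] {μ : Measure α} {R : α → ℝ}

theorem ae_setIntegral_preimage_Iio_eq_Iic [SigmaFinite μ] (hR : Measurable R) (f : α → ℝ) :
    ∀ᵐ t, ∫ x in R ⁻¹' Iio t, f x ∂μ = ∫ x in R ⁻¹' Iic t, f x ∂μ := by
  have hnull : volume {t : ℝ | 0 < μ {x | R x = t}} = 0 :=
    (Measure.countable_meas_level_set_pos hR).measure_zero _
  refine measure_mono_null (fun t ht => ?_) hnull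
  by_contra hlevel
  refine ht (setIntegral_congr_set (ae_eq_set.2 ⟨?_, ?_⟩))
  · rw [sdiff_eq_empty.2 (preimage_mono Iio_subset_Iic_self), measure_empty]
  · rw [← preimage_sdiff, Iic_sdiff_Iio_same]
    exact nonpos_iff_eq_zero.1 (not_lt.1 hlevel)

theorem setIntegral_preimage_Iio_eq_neg_mul_Iic [InvolutiveNeg α] [MeasurableNeg α]
    [μ.IsNegInvariant] {Y : α → ℝ} {c s : ℝ} (hR : Measurable R) (hY : Integrable Y μ)
    (hYmean : ∫ x, Y x ∂μ = 0) (hRneg : ∀ x, R (-x) = c - R x) (hYneg : ∀ x, Y (-x) = s * Y x)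
    (t : ℝ) : ∫ x in R ⁻¹' Iio t, Y x ∂μ = -s * ∫ x in R ⁻¹' Iic (c - t), Y x ∂μ := by
  have hreflect : ∀ x,
      (R ⁻¹' Iio t).indicator Y (-x) = s * (R ⁻¹' Iic (c - t))ᶜ.indicator Y x := by
    intro x
    by_cases hx : c - t < R x
    · simp [hx, hRneg, hYneg, show c - R x < t by linarith]
    · simp [hx, hRneg, show ¬ c - R x < t by linarith]
  have hmeas : MeasurableSet (R ⁻¹' Iic (c - t)) := hR measurableSet_Iic
  rw [← integral_indicator (hR measurableSet_Iio),
    ← (Measure.measurePreserving_neg μ).integral_comp (MeasurableEquiv.neg α).measurableEmbedding]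
  simp only [hreflect, integral_const_mul, integral_indicator hmeas.compl,
    setIntegral_compl hmeas hY, hYmean]
  ring

end CapIntegrals

theorem intervalIntegral_eq_zero_of_ae_neg {E : Type*} [NormedAddCommGroup E] [NormedSpace ℝ E]
    {f : ℝ → E} {a : ℝ} (h : ∀ᵐ x, f (a - x) = -f x) : ∫ x in 0..a, f x = 0 := by
  have hself : ∫ x in 0..a, f x = -∫ x in 0..a, f x := by
    calc ∫ x in 0..a, f x = ∫ x in 0..a, f (a - x) := by
          simp [intervalIntegral.integral_comp_sub_left]
      _ = ∫ x in 0..a, -f x := intervalIntegral.integral_congr_ae (h.mono fun x hx _ => hx)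
      _ = -∫ x in 0..a, f x := intervalIntegral.integral_neg
  rw [eq_neg_iff_add_eq_zero, ← two_smul ℝ] at hself
  exact (smul_eq_zero.1 hself).resolve_left two_ne_zero

theorem setIntegral_Icc_comp_abs (f : ℝ → ℝ) (a : ℝ) :
    ∫ x in Icc (-a) a, f |x| = 2 * ∫ x in Ioc 0 a, f x := by
  have hind : (Icc (-a) a).indicator (fun x => f |x|) = fun x => (Iic a).indicator f |x| := by
    ext x
    simp [indicator_apply, abs_le]
  rw [← integral_indicator measurableSet_Icc, hind, integral_comp_abs,
    setIntegral_indicator measurableSet_Iic, Ioi_inter_Iic]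

noncomputable def diamondWeight (m n : ℕ) (α T : ℝ) : ℝ :=
  |cos (m * T)| ^ α * cos (m * T) * cos (T * (n + m))

theorem diamondWeight_abs (m n : ℕ) (α T : ℝ) :
    diamondWeight m n α |T| = diamondWeight m n α T := by
  rcases abs_choice T with h | h <;> simp [h, diamondWeight]

theorem diamondWeight_pi_sub (m n : ℕ) (α T : ℝ) :
    diamondWeight m n α (π - T) = (-1) ^ n * diamondWeight m n α T := by
  have hm : cos (m * (π - T)) = (-1) ^ m * cos (m * T) := by
    rw [show (m : ℝ) * (π - T) = m * π - m * T by ring, cos_nat_mul_pi_sub]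
  have hnm : cos ((π - T) * (n + m)) = (-1) ^ (n + m) * cos (T * (n + m)) := by
    rw [show (π - T) * (n + m) = ((n + m : ℕ) : ℝ) * π - T * (n + m) by push_cast; ring,
      cos_nat_mul_pi_sub]
  have hsq : ((-1 : ℝ) ^ m) ^ 2 = 1 := by rw [← pow_mul]; exact Even.neg_one_pow ⟨m, by ring⟩
  rw [diamondWeight, diamondWeight, hm, hnm, abs_mul, abs_pow, abs_neg, abs_one, one_pow, one_mul,
    pow_add]
  linear_combination (-1) ^ n * (|cos (m * T)| ^ α * cos (m * T) * cos (T * (n + m))) * hsq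

theorem diamond_integral_vanishes_general (d : ℕ) (hodd : Odd d)
    (n : ℕ)
    (Y : EuclideanSpace ℝ (Fin (d + 1)) → ℝ) (hYc : Continuous Y)
    (hYanti : ∀ X, Y (-X) = (-1 : ℝ) ^ n * Y X)
    (hYmean : ∫ X, Y X ∂(sphereMeasure d) = 0) :
    ∫ T in Set.Icc (-π) π,
      (∫ X, (if Real.arccos (X 0) < π - |T| then
          |Real.cos (((d:ℝ) - 1) / 2 * T)| ^ (2 * ((d:ℝ) + 1) / ((d:ℝ) - 1) - 2)
            * Real.cos (((d:ℝ) - 1) / 2 * T)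
            * Real.cos (T * ((n:ℝ) + ((d:ℝ) - 1) / 2))
            * Y X
        else 0) ∂(sphereMeasure d)) = 0 := by
  obtain ⟨m, hdm⟩ := hodd
  have hm : ((d : ℝ) - 1) / 2 = m := by rw [hdm]; push_cast; ring
  set α : ℝ := 2 * ((d : ℝ) + 1) / ((d : ℝ) - 1) - 2
  set R : EuclideanSpace ℝ (Fin (d + 1)) → ℝ := fun X => arccos (X 0)
  have hRm : Measurable R := by fun_prop
  set G : ℝ → ℝ := fun t => ∫ X in R ⁻¹' Iio t, Y X ∂(sphereMeasure d)
  set H : ℝ → ℝ := fun t => ∫ X in R ⁻¹' Iic t, Y X ∂(sphereMeasure d)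
  have hGH : ∀ t, G t = -(-1) ^ n * H (π - t) :=
    setIntegral_preimage_Iio_eq_neg_mul_Iic hRm hYc.integrable_sphereMeasure hYmean
      (fun X => by simp [R, arccos_neg]) hYanti
  have hinner : ∀ T, (∫ X, (if arccos (X 0) < π - |T| then
          |cos (((d : ℝ) - 1) / 2 * T)| ^ α * cos (((d : ℝ) - 1) / 2 * T)
            * cos (T * ((n : ℝ) + ((d : ℝ) - 1) / 2)) * Y X
        else 0) ∂(sphereMeasure d)) = diamondWeight m n α |T| * G (π - |T|) := by
    intro T
    rw [diamondWeight_abs, hm, ← integral_const_mul, ← integral_indicator (hRm measurableSet_Iio)]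
    congr 1 with X
  simp_rw [hinner, setIntegral_Icc_comp_abs (fun T => diamondWeight m n α T * G (π - T)),
    ← intervalIntegral.integral_of_le pi_pos.le]
  rw [intervalIntegral_eq_zero_of_ae_neg, mul_zero]
  filter_upwards [ae_setIntegral_preimage_Iio_eq_Iic (μ := sphereMeasure d) hRm Y] with T hT
  rw [sub_sub_cancel, diamondWeight_pi_sub, hGH (π - T), sub_sub_cancel, show G T = H T from hT]
  ring

/-- For odd `d`, `p = 2(d+1)/(d−1)`, `n > 0`, and `Y_n` a spherical harmonic of degree `n`
on `S^d` (here abstracted by its parity `Y_n(−X) = (−1)ⁿ Y_n(X)` and mean-zero property),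
the integral over the Penrose diamond `𝔻^{1+d} = {(T,X) : R(X) < π − |T|}` of
`|cos((d−1)T/2)|^{p−2} cos((d−1)T/2) cos(T(n+(d−1)/2)) Y_n(X)` vanishes, where
`R(X) = arccos(X₀)` is the polar angle of `X`. -/
theorem diamond_integral_vanishes (d : ℕ) (hd : 2 ≤ d) (hodd : Odd d)
    (n : ℕ) (hn : 0 < n)
    (Y : EuclideanSpace ℝ (Fin (d + 1)) → ℝ) (hYc : Continuous Y)
    (hYanti : ∀ X, Y (-X) = (-1 : ℝ) ^ n * Y X)
    (hYmean : ∫ X, Y X ∂(sphereMeasure d) = 0) :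
    ∫ T in Set.Icc (-π) π,
      (∫ X, (if Real.arccos (X 0) < π - |T| then
          |Real.cos (((d:ℝ) - 1) / 2 * T)| ^ (2 * ((d:ℝ) + 1) / ((d:ℝ) - 1) - 2)
            * Real.cos (((d:ℝ) - 1) / 2 * T)
            * Real.cos (T * ((n:ℝ) + ((d:ℝ) - 1) / 2))
            * Y X
        else 0) ∂(sphereMeasure d)) = 0 :=
  diamond_integral_vanishes_general d hodd n Y hYc hYanti hYmean
end
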